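/- Let K be a symmetric convex polytope in ℝ^n, let θ ∈ G_K with s_θ = min{s > 0 : g(θ,s) = 1}, and let p ≥ 1 be large enough that p·h_K(θ)/(p+n−1) ≥ s_θ. Then the maximum of the function t ↦ t^p · f_{K,θ}(t) on [0, h_K(θ)] is attained at t_p = p·h_K(θ)/(p+n−1). -/

import Mathlib

open MeasureTheory Filter Set Metric
open scoped RealInnerProductSpace Topology ENNReal NNReal

noncomputable section

/-- Euclidean space `ℝ^n`. -/
abbrev Euc (n : ℕ) := EuclideanSpace ℝ (Fin n)

/-- The support function `h_K(θ) = sup_{x ∈ K} ⟨x, θ⟩` of a set `K ⊆ ℝ^n`. -/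
noncomputable def suppFn {n : ℕ} (K : Set (Euc n)) (θ : Euc n) : ℝ :=
  sSup ((fun x => ⟪x, θ⟫) '' K)

/-- `g(θ, s)`: the number of vertices `v ∈ V` with `⟨v, θ⟩ ≥ s`. -/
noncomputable def gCount {n : ℕ} (V : Finset (Euc n)) (θ : Euc n) (s : ℝ) : ℕ :=
  {v ∈ (V : Set (Euc n)) | s ≤ ⟪v, θ⟫}.ncard

/-- `B_K`: the directions `θ ∈ S^{n-1}` with `g(θ,s) > 1` for all `s ≤ h_K(θ)`. -/
def badSet {n : ℕ} (K : Set (Euc n)) (V : Finset (Euc n)) : Set (Euc n) :=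
  {θ | ‖θ‖ = 1 ∧ ∀ s ≤ suppFn K θ, 1 < gCount V θ s}

/-- `G_K`: the directions `θ ∈ S^{n-1}` with `g(θ,s) = 1` for some `s < h_K(θ)`. -/
def goodSet {n : ℕ} (K : Set (Euc n)) (V : Finset (Euc n)) : Set (Euc n) :=
  {θ | ‖θ‖ = 1 ∧ ∃ s < suppFn K θ, gCount V θ s = 1}

/-- `s_θ = min {s > 0 : g(θ,s) = 1}`. -/
noncomputable def sTheta {n : ℕ} (V : Finset (Euc n)) (θ : Euc n) : ℝ :=
  sInf {s | 0 < s ∧ gCount V θ s = 1}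

/-- `A(δ)`: the directions `θ ∈ S^{n-1}` at distance `< δ` from some `u ∈ B_K`. -/
def Aset {n : ℕ} (K : Set (Euc n)) (V : Finset (Euc n)) (δ : ℝ) : Set (Euc n) :=
  {θ | ‖θ‖ = 1 ∧ ∃ u ∈ badSet K V, ‖θ - u‖ < δ}

/-- The parallel section function `f_{K,θ}(t) = vol_{n-1}(K ∩ (θ^⊥ + tθ))`, the
`(n-1)`-dimensional (Hausdorff) volume of the slice of `K` at height `t` in direction `θ`. -/
noncomputable def sliceVol {n : ℕ} (K : Set (Euc n)) (θ : Euc n) (t : ℝ) : ℝ :=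
  (μH[(n : ℝ) - 1] (K ∩ {x : Euc n | ⟪x, θ⟫ = t})).toReal

/-! Let `v` be the unique vertex of `K` of maximal height `h = h_K(θ)`. All other vertices lie at
height at most `s_θ ≤ t_p`, so `K` is a cone with apex `v` over a base below height `t_p`: for
`t < h` the homothety with centre `v` and ratio `(h - t_p)/(h - t)` maps the slice at height `t`
into the slice at height `t_p`, whence `(h - t_p)^{n-1} f(t) ≤ (h - t)^{n-1} f(t_p)`. Weighted
AM–GM gives `t^p (h - t)^{n-1} ≤ t_p^p (h - t_p)^{n-1}`, and multiplying the two inequalities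
gives `t^p f(t) ≤ t_p^p f(t_p)`. In dimension one the slices are points and `t_p = h`. -/
lemma rpow_mul_sub_rpow_le {p d h t : ℝ} (hp : 0 < p) (hd : 0 < d) (ht₀ : 0 ≤ t) (hth : t ≤ h) :
    t ^ p * (h - t) ^ d ≤ (p * h / (p + d)) ^ p * (d * h / (p + d)) ^ d := by
  have hpd : 0 < p + d := by linarith
  set a := t / p
  set b := (h - t) / d
  set m := h / (p + d)
  have ha : 0 ≤ a := by positivity
  have hb : 0 ≤ b := div_nonneg (by linarith) hd.le
  have hm : 0 ≤ m := div_nonneg (by linarith) hpd.le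
  have hamgm : a ^ (p / (p + d)) * b ^ (d / (p + d)) ≤ m := by
    convert Real.geom_mean_le_arith_mean2_weighted (div_nonneg hp.le hpd.le)
      (div_nonneg hd.le hpd.le) ha hb (by field_simp) using 1
    simp only [a, b, m]
    field_simp
    ring
  have hpow : a ^ p * b ^ d ≤ m ^ p * m ^ d := by
    have := Real.rpow_le_rpow (by positivity) hamgm hpd.le
    rwa [Real.mul_rpow (by positivity) (by positivity), ← Real.rpow_mul ha, ← Real.rpow_mul hb,
      div_mul_cancel₀ _ hpd.ne', div_mul_cancel₀ _ hpd.ne', Real.rpow_add' hm hpd.ne'] at this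
  have ht : t = p * a := by simp only [a]; field_simp
  have hht : h - t = d * b := by simp only [b]; field_simp
  calc t ^ p * (h - t) ^ d = p ^ p * d ^ d * (a ^ p * b ^ d) := by
        rw [hht, ht, Real.mul_rpow hp.le ha, Real.mul_rpow hd.le hb]; ring
    _ ≤ p ^ p * d ^ d * (m ^ p * m ^ d) := by gcongr
    _ = (p * h / (p + d)) ^ p * (d * h / (p + d)) ^ d := by
        rw [mul_div_assoc, mul_div_assoc, Real.mul_rpow hp.le hm, Real.mul_rpow hd.le hm]; ring

section Slices

variable {E : Type*} [NormedAddCommGroup E] [InnerProductSpace ℝ E]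

def slice (K : Set E) (θ : E) (t : ℝ) : Set E := K ∩ {x | ⟪x, θ⟫ = t}

lemma inner_homothety_left (a x θ : E) (c : ℝ) :
    ⟪AffineMap.homothety a c x, θ⟫ = ⟪a, θ⟫ + c * (⟪x, θ⟫ - ⟪a, θ⟫) := by
  rw [AffineMap.homothety_apply, vsub_eq_sub, vadd_eq_add, inner_add_left, real_inner_smul_left,
    inner_sub_left]
  ring

lemma inner_le_of_mem_convexHull {W : Set E} {θ : E} {s : ℝ} (hW : ∀ w ∈ W, ⟪w, θ⟫ ≤ s) {z : E}
    (hz : z ∈ convexHull ℝ W) : ⟪z, θ⟫ ≤ s :=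
  convexHull_min hW
    (convex_halfSpace_le ⟨fun x y => inner_add_left x y θ, fun c x => real_inner_smul_left x θ c⟩ s)
    hz

lemma Convex.homothety_image_slice_subset {K : Set E} (hK : Convex ℝ K) {a : E} (ha : a ∈ K)
    (θ : E) {c : ℝ} (hc : c ∈ Icc (0 : ℝ) 1) (s : ℝ) :
    AffineMap.homothety a c '' slice K θ s ⊆ slice K θ (⟪a, θ⟫ + c * (s - ⟪a, θ⟫)) := by
  rintro _ ⟨x, ⟨hxK, hxs⟩, rfl⟩
  refine ⟨?_, ?_⟩
  · rw [AffineMap.homothety_eq_lineMap]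
    exact hK.lineMap_mem ha hxK hc
  · rw [mem_ofPred_eq, inner_homothety_left, hxs]

lemma eq_or_exists_homothety_of_mem_convexHull_insert {v x : E} {W : Set E}
    (hx : x ∈ convexHull ℝ (insert v W)) :
    x = v ∨ ∃ z ∈ convexHull ℝ W, ∃ β ∈ Icc (0 : ℝ) 1, AffineMap.homothety v β z = x := by
  rcases W.eq_empty_or_nonempty with rfl | hW
  · left
    simpa using hx
  right
  rw [convexHull_insert hW, mem_convexJoin] at hx
  obtain ⟨a, ha, z, hz, hxz⟩ := hx
  rw [mem_singleton_iff.mp ha, segment_eq_image_lineMap] at hxz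
  obtain ⟨β, hβ, rfl⟩ := hxz
  exact ⟨z, hz, β, hβ, AffineMap.homothety_eq_lineMap v β z⟩

section Cone

variable {v θ : E} {W : Set E} {s h : ℝ}

lemma homothety_image_slice_convexHull_insert_subset (hv : ⟪v, θ⟫ = h)
    (hW : ∀ w ∈ W, ⟪w, θ⟫ ≤ s) (hsh : s < h) {t : ℝ} (ht : t < h) :
    AffineMap.homothety v ((h - s) / (h - t)) '' slice (convexHull ℝ (insert v W)) θ t ⊆
      slice (convexHull ℝ (insert v W)) θ s := by
  rintro _ ⟨x, ⟨hx, hxt⟩, rfl⟩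
  rcases eq_or_exists_homothety_of_mem_convexHull_insert hx with rfl | ⟨z, hz, β, hβ, rfl⟩
  · exact absurd (hv ▸ hxt : h = t) ht.ne'
  have hzs : ⟪z, θ⟫ ≤ s := inner_le_of_mem_convexHull hW hz
  have hht : h - t = β * (h - ⟪z, θ⟫) := by
    rw [mem_ofPred_eq, inner_homothety_left, hv] at hxt
    linarith
  have hhz : 0 < h - ⟪z, θ⟫ := by linarith
  have hβ₀ : β ≠ 0 := by rintro rfl; linarith
  rw [← AffineMap.homothety_mul_apply,
    show (h - s) / (h - t) * β = (h - s) / (h - ⟪z, θ⟫) by rw [hht]; field_simp]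
  have hmem := (convex_convexHull ℝ _).homothety_image_slice_subset
    (subset_convexHull ℝ _ (mem_insert v W)) θ (c := (h - s) / (h - ⟪z, θ⟫))
    ⟨div_nonneg (by linarith) hhz.le, (div_le_one hhz).mpr (by linarith)⟩ ⟪z, θ⟫
    ⟨z, ⟨convexHull_mono (subset_insert v W) hz, rfl⟩, rfl⟩
  rw [hv] at hmem
  convert hmem using 2
  field_simp
  ring

lemma slice_convexHull_insert_subset_singleton (hv : ⟪v, θ⟫ = h)
    (hW : ∀ w ∈ W, ⟪w, θ⟫ ≤ s) (hsh : s < h) :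
    slice (convexHull ℝ (insert v W)) θ h ⊆ {v} := by
  rintro x ⟨hx, hxh⟩
  rcases eq_or_exists_homothety_of_mem_convexHull_insert hx with rfl | ⟨z, hz, β, hβ, rfl⟩
  · rfl
  have hzs : ⟪z, θ⟫ ≤ s := inner_le_of_mem_convexHull hW hz
  rw [mem_ofPred_eq, inner_homothety_left, hv] at hxh
  obtain rfl : β = 0 := by nlinarith
  simp

end Cone

section Measure

variable [MeasurableSpace E] [BorelSpace E] {d : ℝ}

lemma ofReal_rpow_mul_hausdorffMeasure_le (hd : 0 ≤ d) (x : E) {c : ℝ} (hc : 0 < c)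
    {A B : Set E} (hAB : AffineMap.homothety x c '' A ⊆ B) :
    ENNReal.ofReal c ^ d * μH[d] A ≤ μH[d] B := by
  calc ENNReal.ofReal c ^ d * μH[d] A = μH[d] (AffineMap.homothety x c '' A) := by
        rw [hausdorffMeasure_homothety_image hd x hc.ne', ENNReal.smul_def, smul_eq_mul,
          ENNReal.coe_rpow_of_ne_zero (by simpa using hc.ne'), ← enorm_eq_nnnorm,
          Real.enorm_eq_ofReal hc.le]
    _ ≤ μH[d] B := measure_mono hAB

lemma hausdorffMeasure_eq_top_of_homothety_image_subset (hd : 0 ≤ d) (x : E) {c : ℝ} (hc : 0 < c)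
    {A B : Set E} (hAB : AffineMap.homothety x c '' A ⊆ B) (hA : μH[d] A = ⊤) :
    μH[d] B = ⊤ := by
  have hpos : ENNReal.ofReal c ^ d ≠ 0 :=
    (ENNReal.rpow_pos (ENNReal.ofReal_pos.mpr hc) ENNReal.ofReal_ne_top).ne'
  simpa [hA, ENNReal.mul_top hpos] using ofReal_rpow_mul_hausdorffMeasure_le hd x hc hAB

lemma rpow_mul_toReal_hausdorffMeasure_le (hd : 0 ≤ d) (x : E) {c : ℝ} (hc : 0 < c)
    {A B : Set E} (hAB : AffineMap.homothety x c '' A ⊆ B) (hB : μH[d] B ≠ ⊤) :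
    c ^ d * (μH[d] A).toReal ≤ (μH[d] B).toReal := by
  have := ENNReal.toReal_mono hB (ofReal_rpow_mul_hausdorffMeasure_le hd x hc hAB)
  rwa [ENNReal.toReal_mul, ← ENNReal.toReal_rpow, ENNReal.toReal_ofReal hc.le] at this

lemma Convex.hausdorffMeasure_slice_eq_top {K : Set E} (hK : Convex ℝ K) {v θ : E} (hv : v ∈ K)
    (hnv : -v ∈ K) {h : ℝ} (hvh : ⟪v, θ⟫ = h) (hd : 0 ≤ d) {s t : ℝ} (hs : s ∈ Ioo (-h) h)
    (ht : t ∈ Ioo (-h) h) (htop : μH[d] (slice K θ s) = ⊤) : μH[d] (slice K θ t) = ⊤ := by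
  obtain ⟨hs₁, hs₂⟩ := hs
  obtain ⟨ht₁, ht₂⟩ := ht
  rcases le_total s t with hst | hts
  · have hc : (h - t) / (h - s) ∈ Icc (0 : ℝ) 1 :=
      ⟨div_nonneg (by linarith) (by linarith), (div_le_one (by linarith)).mpr (by linarith)⟩
    have hsub := hK.homothety_image_slice_subset hv θ hc s
    rw [hvh, show h + (h - t) / (h - s) * (s - h) = t by field_simp; ring] at hsub
    exact hausdorffMeasure_eq_top_of_homothety_image_subset hd v (div_pos (by linarith)
      (by linarith)) hsub htop
  · have hc : (t + h) / (s + h) ∈ Icc (0 : ℝ) 1 :=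
      ⟨div_nonneg (by linarith) (by linarith), (div_le_one (by linarith)).mpr (by linarith)⟩
    have hsub := hK.homothety_image_slice_subset hnv θ hc s
    rw [inner_neg_left, hvh, sub_neg_eq_add, div_mul_cancel₀ _ (by linarith : s + h ≠ 0),
      neg_add_cancel_comm_assoc] at hsub
    exact hausdorffMeasure_eq_top_of_homothety_image_subset hd (-v) (div_pos (by linarith)
      (by linarith)) hsub htop

variable {v θ : E} {W : Set E} {s h : ℝ}

lemma rpow_mul_toReal_hausdorffMeasure_slice_le (hv : ⟪v, θ⟫ = h)
    (hnv : -v ∈ convexHull ℝ (insert v W)) (hW : ∀ w ∈ W, ⟪w, θ⟫ ≤ s) (hs : -h < s) (hsh : s < h)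
    (hd : 0 < d) {t : ℝ} (ht : t ∈ Ioc (-h) h) :
    (h - s) ^ d * (μH[d] (slice (convexHull ℝ (insert v W)) θ t)).toReal ≤
      (h - t) ^ d * (μH[d] (slice (convexHull ℝ (insert v W)) θ s)).toReal := by
  have hvK : v ∈ convexHull ℝ (insert v W) := subset_convexHull ℝ _ (mem_insert v W)
  rcases ht.2.eq_or_lt with hth | hth
  · have := Measure.nullSingletonClass_hausdorff E hd
    have hnull : μH[d] (slice (convexHull ℝ (insert v W)) θ t) = 0 := measure_mono_null
      (hth ▸ slice_convexHull_insert_subset_singleton hv hW hsh) (measure_singleton v)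
    rw [hnull, ENNReal.toReal_zero, mul_zero]
    exact mul_nonneg (Real.rpow_nonneg (by linarith) d) ENNReal.toReal_nonneg
  -- An infinite slice at height `s` makes every slice strictly between `-h` and `h` infinite,
  -- so both sides are `ENNReal.toReal ⊤ = 0`.
  by_cases htop : μH[d] (slice (convexHull ℝ (insert v W)) θ s) = ⊤
  · rw [(convex_convexHull ℝ _).hausdorffMeasure_slice_eq_top hvK hnv hv hd.le ⟨hs, hsh⟩
      ⟨ht.1, hth⟩ htop, htop]
    simp
  · have := rpow_mul_toReal_hausdorffMeasure_le hd.le v (div_pos (by linarith) (by linarith))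
      (homothety_image_slice_convexHull_insert_subset hv hW hsh hth) htop
    rwa [Real.div_rpow (by linarith) (by linarith), div_mul_eq_mul_div,
      div_le_iff₀ (Real.rpow_pos_of_pos (by linarith) d), mul_comm _ ((h - t) ^ d)] at this

theorem isMaxOn_rpow_mul_hausdorffMeasure_slice {p : ℝ} (hp : 0 < p) (hd : 0 < d) (hh : 0 < h)
    (hv : ⟪v, θ⟫ = h) (hnv : -v ∈ convexHull ℝ (insert v W))
    (hW : ∀ w ∈ W, ⟪w, θ⟫ ≤ p * h / (p + d)) :
    IsMaxOn (fun t => t ^ p * (μH[d] (slice (convexHull ℝ (insert v W)) θ t)).toReal)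
      (Icc 0 h) (p * h / (p + d)) := by
  intro t ht
  set f := fun t => (μH[d] (slice (convexHull ℝ (insert v W)) θ t)).toReal
  set tp := p * h / (p + d)
  have hgap : h - tp = d * h / (p + d) := by
    simp only [tp]; field_simp; ring
  have hgap_pos : 0 < h - tp := by rw [hgap]; positivity
  have htp : 0 < tp := by positivity
  have hslice : (h - tp) ^ d * f t ≤ (h - t) ^ d * f tp :=
    rpow_mul_toReal_hausdorffMeasure_slice_le hv hnv hW (by linarith) (by linarith) hd
      ⟨by linarith [ht.1], ht.2⟩
  have hamgm : t ^ p * (h - t) ^ d ≤ tp ^ p * (h - tp) ^ d :=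
    hgap ▸ rpow_mul_sub_rpow_le hp hd ht.1 ht.2
  show t ^ p * f t ≤ tp ^ p * f tp
  refine le_of_mul_le_mul_left ?_ (Real.rpow_pos_of_pos hgap_pos d)
  calc (h - tp) ^ d * (t ^ p * f t) = t ^ p * ((h - tp) ^ d * f t) := by ring
    _ ≤ t ^ p * ((h - t) ^ d * f tp) := by have := ht.1; gcongr
    _ = t ^ p * (h - t) ^ d * f tp := by ring
    _ ≤ tp ^ p * (h - tp) ^ d * f tp := by gcongr
    _ = (h - tp) ^ d * (tp ^ p * f tp) := by ring

end Measure

end Slices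

lemma subsingleton_setOf_inner_eq_of_finrank_eq_one {E : Type*} [NormedAddCommGroup E]
    [InnerProductSpace ℝ E] (hE : Module.finrank ℝ E = 1) {θ : E} (hθ : θ ≠ 0) (t : ℝ) :
    {x : E | ⟪x, θ⟫ = t}.Subsingleton := by
  intro x hx y hy
  obtain ⟨c, hc⟩ := (finrank_eq_one_iff_of_nonzero' θ hθ).mp hE (x - y)
  have horth : ⟪x - y, θ⟫ = 0 := by rw [inner_sub_left, hx, hy, sub_self]
  rw [← hc, real_inner_smul_left, real_inner_self_eq_norm_sq] at horth
  obtain rfl : c = 0 := by simpa [hθ] using horth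
  rw [zero_smul, eq_comm, sub_eq_zero] at hc
  exact hc

lemma isMaxOn_rpow_mul_sliceVol_of_dim_one {K : Set (Euc 1)} {θ v : Euc 1} (hθ : θ ≠ 0)
    (hv : v ∈ K) {p : ℝ} (hp : 0 ≤ p) :
    IsMaxOn (fun t => t ^ p * sliceVol K θ t) (Icc 0 ⟪v, θ⟫) ⟪v, θ⟫ := by
  intro t ht
  have hsub (s : ℝ) : (K ∩ {x | ⟪x, θ⟫ = s}).Subsingleton :=
    (subsingleton_setOf_inner_eq_of_finrank_eq_one (finrank_euclideanSpace_fin) hθ s).anti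
      inter_subset_right
  have htop : sliceVol K θ ⟪v, θ⟫ = 1 := by
    rw [sliceVol, (hsub _).eq_singleton_of_mem ⟨hv, rfl⟩, Nat.cast_one, sub_self,
      Measure.hausdorffMeasure_zero_singleton, ENNReal.toReal_one]
  have hle : sliceVol K θ t ≤ 1 := by
    rw [sliceVol, Nat.cast_one, sub_self]
    exact ENNReal.toReal_le_of_le_ofReal zero_le_one
      (by simpa using Measure.hausdorffMeasure_le_one_of_subsingleton (hsub t) le_rfl)
  show t ^ p * sliceVol K θ t ≤ ⟪v, θ⟫ ^ p * sliceVol K θ ⟪v, θ⟫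
  rw [htop, mul_one]
  exact (mul_le_of_le_one_right (Real.rpow_nonneg ht.1 p) hle).trans
    (Real.rpow_le_rpow ht.1 ht.2 hp)

section Vertices

variable {n : ℕ} {θ b : Euc n}

lemma suppFn_convexHull_eq_inner {V : Set (Euc n)} (hb : b ∈ V)
    (hmax : ∀ w ∈ V, ⟪w, θ⟫ ≤ ⟪b, θ⟫) : suppFn (convexHull ℝ V) θ = ⟪b, θ⟫ :=
  IsGreatest.csSup_eq ⟨⟨b, subset_convexHull ℝ V hb, rfl⟩,
    by rintro _ ⟨x, hx, rfl⟩; exact inner_le_of_mem_convexHull hmax hx⟩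

variable {V : Finset (Euc n)}

lemma inner_lt_of_gCount_eq_one {s : ℝ} (hs : gCount V θ s = 1) (hb : b ∈ V)
    (hmax : ∀ u ∈ V, ⟪u, θ⟫ ≤ ⟪b, θ⟫) {w : Euc n} (hw : w ∈ V) (hwb : w ≠ b) : ⟪w, θ⟫ < s := by
  obtain ⟨u, hu⟩ := Set.ncard_eq_one.mp hs
  have huV : u ∈ {x ∈ (V : Set (Euc n)) | s ≤ ⟪x, θ⟫} := hu ▸ rfl
  have hbu : b ∈ {x ∈ (V : Set (Euc n)) | s ≤ ⟪x, θ⟫} := ⟨hb, huV.2.trans (hmax u huV.1)⟩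
  by_contra! hws
  have hwu : w ∈ {x ∈ (V : Set (Euc n)) | s ≤ ⟪x, θ⟫} := ⟨hw, hws⟩
  rw [hu] at hbu hwu
  exact hwb (hwu.trans hbu.symm)

lemma gCount_inner_eq_one (hb : b ∈ V) (htop : ∀ w ∈ V, w ≠ b → ⟪w, θ⟫ < ⟪b, θ⟫) :
    gCount V θ ⟪b, θ⟫ = 1 := by
  rw [gCount, Set.ncard_eq_one]
  refine ⟨b, Set.eq_singleton_iff_unique_mem.mpr ⟨⟨hb, le_rfl⟩, fun w ⟨hw, hbw⟩ => ?_⟩⟩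
  by_contra hwb
  exact (htop w hw hwb).not_ge hbw

lemma inner_le_sTheta (hb : b ∈ V) (hmax : ∀ u ∈ V, ⟪u, θ⟫ ≤ ⟪b, θ⟫) (hb₀ : 0 < ⟪b, θ⟫)
    (htop : ∀ w ∈ V, w ≠ b → ⟪w, θ⟫ < ⟪b, θ⟫) {w : Euc n} (hw : w ∈ V) (hwb : w ≠ b) :
    ⟪w, θ⟫ ≤ sTheta V θ :=
  le_csInf ⟨_, hb₀, gCount_inner_eq_one hb htop⟩
    fun _ ⟨_, hs⟩ => (inner_lt_of_gCount_eq_one hs hb hmax hw hwb).le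

end Vertices

theorem stmt10_general {n : ℕ} (K : Set (Euc n)) (V : Finset (Euc n))
    (hKV : K = convexHull ℝ (V : Set (Euc n)))
    (hsymm : ∀ x ∈ K, -x ∈ K)
    (θ : Euc n) (hθ : θ ∈ goodSet K V)
    (p : ℝ) (hp : 1 ≤ p)
    (hlarge : sTheta V θ ≤ p * suppFn K θ / (p + (n : ℝ) - 1)) :
    IsMaxOn (fun t : ℝ => t ^ p * sliceVol K θ t) (Icc 0 (suppFn K θ))
      (p * suppFn K θ / (p + (n : ℝ) - 1)) := by
  subst hKV
  obtain ⟨hθ₁, s, hs, hgs⟩ := hθ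
  have hV : V.Nonempty := by
    by_contra! hV
    simp [gCount, hV] at hgs
  obtain ⟨v, hv, hvmax⟩ := V.exists_max_image (⟪·, θ⟫) hV
  rw [suppFn_convexHull_eq_inner (Finset.mem_coe.mpr hv) hvmax] at hs hlarge ⊢
  have htop (w) (hw : w ∈ V) (hwv : w ≠ v) : ⟪w, θ⟫ < ⟪v, θ⟫ :=
    (inner_lt_of_gCount_eq_one hgs hv hvmax hw hwv).trans hs
  rcases le_or_gt ⟪v, θ⟫ 0 with hh | hh
  · intro t ht
    obtain ⟨rfl, ht₀⟩ : t = 0 ∧ ⟪v, θ⟫ = 0 := ⟨by linarith [ht.1, ht.2], by linarith [ht.1, ht.2]⟩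
    simp [ht₀]
  have hvK : v ∈ convexHull ℝ (V : Set (Euc n)) := subset_convexHull ℝ _ hv
  have hnv := hsymm v hvK
  rcases Nat.lt_or_ge n 2 with hn | hn
  · interval_cases n
    · exact absurd hθ₁ (by simp [Subsingleton.elim θ 0])
    · rw [Nat.cast_one, add_sub_cancel_right, mul_div_cancel_left₀ _ (by linarith)]
      exact isMaxOn_rpow_mul_sliceVol_of_dim_one (by rintro rfl; simp at hθ₁) hvK (by linarith)
  have hW (w) (hw : w ∈ (V : Set (Euc n)) \ {v}) : ⟪w, θ⟫ ≤ p * ⟪v, θ⟫ / (p + (n - 1)) :=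
    (inner_le_sTheta hv hvmax hh htop hw.1 hw.2).trans (by rwa [← add_sub_assoc])
  have hn' : (2 : ℝ) ≤ n := by exact_mod_cast hn
  have hVins : insert v ((V : Set (Euc n)) \ {v}) = V := by
    rw [insert_sdiff_singleton, insert_eq_of_mem (Finset.mem_coe.mpr hv)]
  have hmax := isMaxOn_rpow_mul_hausdorffMeasure_slice (d := n - 1) (by linarith) (by linarith)
    hh rfl (by rwa [hVins]) hW
  rwa [hVins, ← add_sub_assoc] at hmax

/-- For a symmetric convex polytope `K`, `θ ∈ G_K` and `p ≥ 1` large enough that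
`p h_K(θ)/(p+n-1) ≥ s_θ`, the maximum of `t ↦ t^p f_{K,θ}(t)` on `[0, h_K(θ)]` is attained
at `t_p = p h_K(θ)/(p+n-1)`. -/
theorem stmt10 {n : ℕ} (K : Set (Euc n)) (V : Finset (Euc n))
    (hKV : K = convexHull ℝ (V : Set (Euc n)))
    (hVext : (V : Set (Euc n)) = K.extremePoints ℝ)
    (hsymm : ∀ x ∈ K, -x ∈ K)
    (θ : Euc n) (hθ : θ ∈ goodSet K V)
    (p : ℝ) (hp : 1 ≤ p)
    (hlarge : sTheta V θ ≤ p * suppFn K θ / (p + (n : ℝ) - 1)) :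
    IsMaxOn (fun t : ℝ => t ^ p * sliceVol K θ t) (Icc 0 (suppFn K θ))
      (p * suppFn K θ / (p + (n : ℝ) - 1)) :=
  stmt10_general K V hKV hsymm θ hθ p hp hlarge
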